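/- arXiv:2408.16282 — 4 statements merged into one kernel-verified Lean document; each statement's English description precedes it below -/
import Mathlib

section
/- Let E be a finite-dimensional real inner product space with induced norm ‖·‖_a, and let ‖·‖_b be another norm on E satisfying b₁‖v‖_b ≤ ‖v‖_a ≤ b₂‖v‖_b for all v ∈ E, with constants b₁, b₂ > 0. Let T : E → E be a linear map and Λ a constant with 0 ≤ Λ < 1 such that ‖v − T(v)‖_a ≤ Λ‖v‖_a for all v ∈ E. Then for any u, u⁰ ∈ E and every j ≥ 1, with K_j := span{T(u − u⁰), T²(u − u⁰), …, Tʲ(u − u⁰)}, one has inf_{v ∈ u⁰ + K_j} ‖T(u − v)‖_b ≤ Λʲ · ((1 + Λ)/(1 − Λ)) · (b₂/b₁) · ‖T(u − u⁰)‖_b. -/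
/-!
Starting from `u⁰`, the Krylov correction `w = e - (1 - T)ʲ e` (with `e = u - u⁰`) lies in `K_j`,
since `(1 - T)ʲ - 1` is a polynomial in `T` without constant term and of degree at most `j`, and it
leaves the error `(1 - T)ʲ e`, of `a`-norm at most `Λʲ ‖e‖`. As `‖v - T v‖ ≤ Λ ‖v‖` forces
`(1 - Λ) ‖v‖ ≤ ‖T v‖ ≤ (1 + Λ) ‖v‖`, the residual of this choice is bounded by
`(1 + Λ) Λʲ ‖e‖ ≤ Λʲ (1 + Λ) / (1 - Λ) ‖T e‖`; the two norm equivalences supply `b₂ / b₁`.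
-/

section Krylov

variable {R M : Type*} [CommRing R] [AddCommGroup M] [Module R M]

def krylovSpace (T : Module.End R M) (e : M) (j : ℕ) : Submodule R M :=
  Submodule.span R ((fun m : ℕ => (T ^ m) e) '' Set.Icc 1 j)

theorem krylovSpace_mono (T : Module.End R M) (e : M) {i j : ℕ} (hij : i ≤ j) :
    krylovSpace T e i ≤ krylovSpace T e j :=
  Submodule.span_mono (Set.image_mono (Set.Icc_subset_Icc_right hij))

theorem apply_mem_krylovSpace (T : Module.End R M) (e : M) {j : ℕ} (hj : 1 ≤ j) :
    T e ∈ krylovSpace T e j :=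
  Submodule.subset_span ⟨1, ⟨le_rfl, hj⟩, pow_one T ▸ rfl⟩

theorem map_krylovSpace_le (T : Module.End R M) (e : M) (j : ℕ) :
    (krylovSpace T e j).map T ≤ krylovSpace T e (j + 1) := by
  rw [krylovSpace, Submodule.map_span, Submodule.span_le]
  rintro _ ⟨_, ⟨m, ⟨hm1, hmj⟩, rfl⟩, rfl⟩
  refine Submodule.subset_span ⟨m + 1, ⟨by omega, by omega⟩, ?_⟩
  show (T ^ (m + 1)) e = T ((T ^ m) e)
  rw [pow_succ', Module.End.mul_apply]

theorem one_sub_pow_apply_sub_mem_krylovSpace (T : Module.End R M) (e : M) (j : ℕ) :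
    ((1 - T) ^ j) e - e ∈ krylovSpace T e j := by
  induction j with
  | zero => simp
  | succ j ih =>
    have hrec : ((1 - T) ^ (j + 1)) e - e
        = (((1 - T) ^ j) e - e) - T (((1 - T) ^ j) e - e) - T e := by
      rw [pow_succ', Module.End.mul_apply, LinearMap.sub_apply, Module.End.one_apply, map_sub]
      abel
    rw [hrec]
    refine sub_mem (sub_mem (krylovSpace_mono T e j.le_succ ih) ?_)
      (apply_mem_krylovSpace T e (Nat.le_add_left 1 j))
    exact map_krylovSpace_le T e j (Submodule.mem_map_of_mem ih)

end Krylov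

section Contraction

variable {E : Type*} [SeminormedAddCommGroup E]

theorem norm_le_one_add_mul_of_norm_sub_le {x y : E} {Λ : ℝ} (h : ‖x - y‖ ≤ Λ * ‖x‖) :
    ‖y‖ ≤ (1 + Λ) * ‖x‖ := by
  have := norm_le_norm_add_norm_sub' y x
  rw [norm_sub_rev] at this
  linarith

theorem one_sub_mul_norm_le_of_norm_sub_le {x y : E} {Λ : ℝ} (h : ‖x - y‖ ≤ Λ * ‖x‖) :
    (1 - Λ) * ‖x‖ ≤ ‖y‖ := by
  have := norm_sub_norm_le x y
  linarith

theorem norm_one_sub_pow_apply_le {R : Type*} [Semiring R] [Module R E] {T : Module.End R E}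
    {Λ : ℝ} (hΛ : 0 ≤ Λ) (hT : ∀ v, ‖v - T v‖ ≤ Λ * ‖v‖) (k : ℕ) (v : E) :
    ‖((1 - T) ^ k) v‖ ≤ Λ ^ k * ‖v‖ := by
  induction k with
  | zero => simp
  | succ k ih =>
    calc ‖((1 - T) ^ (k + 1)) v‖ = ‖((1 - T) ^ k) v - T (((1 - T) ^ k) v)‖ := by
          rw [pow_succ', Module.End.mul_apply, LinearMap.sub_apply, Module.End.one_apply]
      _ ≤ Λ * ‖((1 - T) ^ k) v‖ := hT _
      _ ≤ Λ * (Λ ^ k * ‖v‖) := by gcongr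
      _ = Λ ^ (k + 1) * ‖v‖ := by ring

end Contraction

theorem gmres_convergence_rate_general {E : Type*} [NormedAddCommGroup E] [InnerProductSpace ℝ E]
    (nb : E → ℝ) (b1 b2 : ℝ) (hb1 : 0 < b1) (hb2 : 0 < b2)
    (hnb : ∀ v : E, b1 * nb v ≤ ‖v‖ ∧ ‖v‖ ≤ b2 * nb v)
    (T : E →ₗ[ℝ] E) (Λ : ℝ) (hΛ0 : 0 ≤ Λ) (hΛ1 : Λ < 1)
    (hT : ∀ v : E, ‖v - T v‖ ≤ Λ * ‖v‖)
    (u u0 : E) (j : ℕ) :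
    sInf {r : ℝ | ∃ w ∈ Submodule.span ℝ
          ((fun m : ℕ => (T ^ m) (u - u0)) '' Set.Icc 1 j),
        r = nb (T (u - (u0 + w)))}
      ≤ Λ ^ j * ((1 + Λ) / (1 - Λ)) * (b2 / b1) * nb (T (u - u0)) := by
  set e := u - u0
  have hnb_nonneg (v : E) : 0 ≤ nb v :=
    nonneg_of_mul_nonneg_right ((norm_nonneg v).trans (hnb v).2) hb2
  have hw : e - ((1 - T) ^ j) e ∈ krylovSpace T e j := by
    simpa using neg_mem (one_sub_pow_apply_sub_mem_krylovSpace T e j)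
  have hΛ1' : 0 < 1 - Λ := sub_pos.2 hΛ1
  have he : ‖e‖ ≤ ‖T e‖ / (1 - Λ) :=
    (le_div_iff₀' hΛ1').2 (one_sub_mul_norm_le_of_norm_sub_le (hT e))
  calc _ ≤ nb (T (((1 - T) ^ j) e)) := by
        refine csInf_le ⟨0, ?_⟩ ⟨_, hw, by rw [← sub_sub, sub_sub_cancel]⟩
        rintro _ ⟨_, _, rfl⟩
        exact hnb_nonneg _
    _ ≤ ‖T (((1 - T) ^ j) e)‖ / b1 := (le_div_iff₀' hb1).2 (hnb _).1
    _ ≤ (1 + Λ) * (Λ ^ j * ‖e‖) / b1 := by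
        gcongr
        exact (norm_le_one_add_mul_of_norm_sub_le (hT _)).trans
          (by gcongr; exact norm_one_sub_pow_apply_le hΛ0 hT j e)
    _ ≤ (1 + Λ) * (Λ ^ j * (b2 * nb (T e) / (1 - Λ))) / b1 := by
        gcongr
        exact he.trans (by gcongr; exact (hnb _).2)
    _ = Λ ^ j * ((1 + Λ) / (1 - Λ)) * (b2 / b1) * nb (T e) := by
        field_simp

/-- Convergence rate of preconditioned GMRES: the j-th GMRES residual (in the b-norm)
    is bounded by Λʲ · ((1+Λ)/(1−Λ)) · (b₂/b₁) times the initial residual. -/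
theorem gmres_convergence_rate {E : Type*} [NormedAddCommGroup E] [InnerProductSpace ℝ E]
    [FiniteDimensional ℝ E]
    (nb : E → ℝ) (b1 b2 : ℝ) (hb1 : 0 < b1) (hb2 : 0 < b2)
    (hnb : ∀ v : E, b1 * nb v ≤ ‖v‖ ∧ ‖v‖ ≤ b2 * nb v)
    (T : E →ₗ[ℝ] E) (Λ : ℝ) (hΛ0 : 0 ≤ Λ) (hΛ1 : Λ < 1)
    (hT : ∀ v : E, ‖v - T v‖ ≤ Λ * ‖v‖)
    (u u0 : E) (j : ℕ) (hj : 1 ≤ j) :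
    sInf {r : ℝ | ∃ w ∈ Submodule.span ℝ
          ((fun m : ℕ => (T ^ m) (u - u0)) '' Set.Icc 1 j),
        r = nb (T (u - (u0 + w)))}
      ≤ Λ ^ j * ((1 + Λ) / (1 - Λ)) * (b2 / b1) * nb (T (u - u0)) :=
  gmres_convergence_rate_general nb b1 b2 hb1 hb2 hnb T Λ hΛ0 hΛ1 hT u u0 j
end

section
/- Let E be a finite-dimensional real inner product space with induced norm ‖·‖_a, let ‖·‖_b be another norm on E with b₁‖v‖_b ≤ ‖v‖_a ≤ b₂‖v‖_b for all v ∈ E (b₁, b₂ > 0), and let T : E → E be linear with ‖v − T(v)‖_a ≤ Λ‖v‖_a for all v ∈ E, where 0 < Λ < 1. Let k ∈ ℕ be such that ((1 + Λ)/(1 − Λ)) · (b₂/b₁) · Λᵏ ≤ 1. Then for any u, u⁰ ∈ E and every j ≥ 1, with K_m := span{T(u − u⁰), …, Tᵐ(u − u⁰)}, one has inf_{v ∈ u⁰ + K_{j+k}} ‖T(u − v)‖_b ≤ Λʲ ‖T(u − u⁰)‖_b. -/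
/-! The residual polynomial `(1 - z)ⁿ` takes the value `1` at `0`, so `w := e - (1 - T)ⁿ e`
with `e = u - u⁰` lies in `Kₙ` and leaves the residual `T(u - u⁰ - w) = (1 - T)ⁿ T e`.
Since `1 - T` contracts `‖·‖_a` by `Λ`, this residual has `a`-norm at most `Λʲ⁺ᵏ ‖T e‖_a`,
and passing twice between the equivalent norms costs a factor `b₂ / b₁ ≤ Λ⁻ᵏ`, which the
lag `k` absorbs. -/

namespace LinearMap

theorem norm_pow_apply_le {R E : Type*} [Semiring R] [SeminormedAddCommGroup E]
    [Module R E] (S : E →ₗ[R] E) {Λ : ℝ} (hΛ : 0 ≤ Λ) (hS : ∀ x, ‖S x‖ ≤ Λ * ‖x‖) (n : ℕ) (x : E) :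
    ‖(S ^ n) x‖ ≤ Λ ^ n * ‖x‖ := by
  induction n with
  | zero => simp
  | succ n ih =>
    calc ‖(S ^ (n + 1)) x‖ = ‖S ((S ^ n) x)‖ := by rw [pow_succ', Module.End.mul_apply]
      _ ≤ Λ * (Λ ^ n * ‖x‖) := (hS _).trans (mul_le_mul_of_nonneg_left ih hΛ)
      _ = Λ ^ (n + 1) * ‖x‖ := by ring

end LinearMap

section Krylov

variable {R M : Type*} [Ring R] [AddCommGroup M] [Module R M]

def krylovSubspace (T : M →ₗ[R] M) (e : M) (m : ℕ) : Submodule R M :=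
  Submodule.span R ((fun i : ℕ => (T ^ i) e) '' Set.Icc 1 m)

variable (T : M →ₗ[R] M) (e : M)

theorem krylovSubspace_mono {m m' : ℕ} (h : m ≤ m') :
    krylovSubspace T e m ≤ krylovSubspace T e m' :=
  Submodule.span_mono (Set.image_mono (Set.Icc_subset_Icc_right h))

theorem apply_mem_krylovSubspace_succ {m : ℕ} {x : M} (hx : x ∈ krylovSubspace T e m) :
    T x ∈ krylovSubspace T e (m + 1) := by
  have hmap : (krylovSubspace T e m).map T ≤ krylovSubspace T e (m + 1) := by
    rw [krylovSubspace, Submodule.map_span, Submodule.span_le]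
    rintro _ ⟨_, ⟨i, ⟨hi1, him⟩, rfl⟩, rfl⟩
    refine Submodule.subset_span ⟨i + 1, ⟨by omega, by omega⟩, ?_⟩
    exact congrArg (· e) (pow_succ' T i)
  exact hmap (Submodule.mem_map_of_mem hx)

theorem one_sub_pow_apply_mem_krylovSubspace {m : ℕ} {x : M} (hx : x ∈ krylovSubspace T e m)
    (n : ℕ) : ((1 - T) ^ n) x ∈ krylovSubspace T e (m + n) := by
  induction n with
  | zero => simpa using hx
  | succ n ih =>
    rw [pow_succ', Module.End.mul_apply, LinearMap.sub_apply, Module.End.one_apply, ← add_assoc]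
    exact sub_mem (krylovSubspace_mono T e (Nat.le_succ _) ih)
      (apply_mem_krylovSubspace_succ T e ih)

theorem sub_one_sub_pow_apply_mem_krylovSubspace (n : ℕ) :
    e - ((1 - T) ^ n) e ∈ krylovSubspace T e n := by
  induction n with
  | zero => simp
  | succ n ih =>
    have hTe : T e ∈ krylovSubspace T e 1 := Submodule.subset_span ⟨1, by simp, by simp⟩
    have hsplit : e - ((1 - T) ^ (n + 1)) e = (e - ((1 - T) ^ n) e) + ((1 - T) ^ n) (T e) := by
      rw [pow_succ, Module.End.mul_apply, LinearMap.sub_apply, Module.End.one_apply, map_sub]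
      abel
    rw [hsplit, add_comm n 1]
    exact add_mem (krylovSubspace_mono T e (by omega) ih)
      (one_sub_pow_apply_mem_krylovSubspace T e hTe n)

theorem apply_one_sub_pow_apply (n : ℕ) (x : M) : T (((1 - T) ^ n) x) = ((1 - T) ^ n) (T x) :=
  LinearMap.congr_fun (((Commute.one_left T).sub_left (Commute.refl T)).pow_left n).symm.eq x

end Krylov

theorem mul_pow_le_of_lag {Λ b1 b2 : ℝ} {k : ℕ} (hb1 : 0 < b1) (hb2 : 0 < b2) (hΛ0 : 0 ≤ Λ)
    (hΛ1 : Λ < 1) (hk : (1 + Λ) / (1 - Λ) * (b2 / b1) * Λ ^ k ≤ 1) : b2 * Λ ^ k ≤ b1 := by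
  have hfrac : 1 ≤ (1 + Λ) / (1 - Λ) := by rw [le_div_iff₀ (by linarith)]; linarith
  have h : b2 / b1 * Λ ^ k ≤ 1 := by
    calc b2 / b1 * Λ ^ k ≤ (1 + Λ) / (1 - Λ) * (b2 / b1 * Λ ^ k) :=
          le_mul_of_one_le_left (by positivity) hfrac
      _ ≤ 1 := by rwa [← mul_assoc]
  rwa [div_mul_eq_mul_div, div_le_one hb1] at h

theorem gmres_convergence_with_lag_general {E : Type*} [NormedAddCommGroup E] [InnerProductSpace ℝ E]
    (nb : E → ℝ) (b1 b2 : ℝ) (hb1 : 0 < b1) (hb2 : 0 < b2)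
    (hnb : ∀ v : E, b1 * nb v ≤ ‖v‖ ∧ ‖v‖ ≤ b2 * nb v)
    (T : E →ₗ[ℝ] E) (Λ : ℝ) (hΛ0 : 0 < Λ) (hΛ1 : Λ < 1)
    (hT : ∀ v : E, ‖v - T v‖ ≤ Λ * ‖v‖)
    (k : ℕ) (hk : ((1 + Λ) / (1 - Λ)) * (b2 / b1) * Λ ^ k ≤ 1)
    (u u0 : E) (j : ℕ) :
    sInf {r : ℝ | ∃ w ∈ Submodule.span ℝ
          ((fun m : ℕ => (T ^ m) (u - u0)) '' Set.Icc 1 (j + k)),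
        r = nb (T (u - (u0 + w)))}
      ≤ Λ ^ j * nb (T (u - u0)) := by
  set e := u - u0 with he
  have hnb_nonneg (v : E) : 0 ≤ nb v :=
    nonneg_of_mul_nonneg_right ((norm_nonneg v).trans (hnb v).2) hb2
  have hres : T (u - (u0 + (e - ((1 - T) ^ (j + k)) e))) = ((1 - T) ^ (j + k)) (T e) := by
    rw [show u - (u0 + (e - ((1 - T) ^ (j + k)) e)) = ((1 - T) ^ (j + k)) e by rw [he]; abel,
      apply_one_sub_pow_apply]
  have hcontr := (1 - T).norm_pow_apply_le hΛ0.le hT (j + k) (T e)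
  have hbound : b1 * nb (((1 - T) ^ (j + k)) (T e)) ≤ b1 * (Λ ^ j * nb (T e)) :=
    calc b1 * nb (((1 - T) ^ (j + k)) (T e))
        ≤ Λ ^ (j + k) * ‖T e‖ := (hnb _).1.trans hcontr
      _ ≤ Λ ^ (j + k) * (b2 * nb (T e)) := by gcongr; exact (hnb _).2
      _ = Λ ^ j * (b2 * Λ ^ k * nb (T e)) := by ring
      _ ≤ Λ ^ j * (b1 * nb (T e)) := by
        gcongr
        · exact hnb_nonneg _
        · exact mul_pow_le_of_lag hb1 hb2 hΛ0.le hΛ1 hk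
      _ = b1 * (Λ ^ j * nb (T e)) := by ring
  refine (csInf_le ?_ ?_).trans (le_of_mul_le_mul_left hbound hb1)
  · exact ⟨0, fun _ ⟨_, _, hr⟩ => hr ▸ hnb_nonneg _⟩
  · exact ⟨_, sub_one_sub_pow_apply_mem_krylovSubspace T e (j + k), congrArg nb hres.symm⟩

/-- Preconditioned GMRES: after a lag of k steps (with
    ((1+Λ)/(1−Λ))·(b₂/b₁)·Λᵏ ≤ 1), the residual at step j+k is bounded by
    Λʲ times the initial residual. -/
theorem gmres_convergence_with_lag {E : Type*} [NormedAddCommGroup E] [InnerProductSpace ℝ E]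
    [FiniteDimensional ℝ E]
    (nb : E → ℝ) (b1 b2 : ℝ) (hb1 : 0 < b1) (hb2 : 0 < b2)
    (hnb : ∀ v : E, b1 * nb v ≤ ‖v‖ ∧ ‖v‖ ≤ b2 * nb v)
    (T : E →ₗ[ℝ] E) (Λ : ℝ) (hΛ0 : 0 < Λ) (hΛ1 : Λ < 1)
    (hT : ∀ v : E, ‖v - T v‖ ≤ Λ * ‖v‖)
    (k : ℕ) (hk : ((1 + Λ) / (1 - Λ)) * (b2 / b1) * Λ ^ k ≤ 1)
    (u u0 : E) (j : ℕ) (hj : 1 ≤ j) :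
    sInf {r : ℝ | ∃ w ∈ Submodule.span ℝ
          ((fun m : ℕ => (T ^ m) (u - u0)) '' Set.Icc 1 (j + k)),
        r = nb (T (u - (u0 + w)))}
      ≤ Λ ^ j * nb (T (u - u0)) :=
  gmres_convergence_with_lag_general nb b1 b2 hb1 hb2 hnb T Λ hΛ0 hΛ1 hT k hk u u0 j
end

section
/- Let E be a real inner product space, let w₁, …, w_M ∈ E, and suppose there is a coloring c : {1, …, M} → {1, …, ζ} such that ⟨w_i, w_j⟩ = 0 whenever i ≠ j and c(i) = c(j). Then ‖∑_{i=1}^M w_i‖² ≤ ζ · ∑_{i=1}^M ‖w_i‖². -/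
/-! Group the vectors by colour. Each colour class is an orthogonal family, so by Pythagoras its
sum has squared norm equal to the sum of the squared norms of its members; the sum of the at most
`ζ` class sums is then controlled by Cauchy–Schwarz, `‖∑ₖ Sₖ‖² ≤ (∑ₖ ‖Sₖ‖)² ≤ ζ ∑ₖ ‖Sₖ‖²`. -/

open Finset

theorem norm_sum_sq_le_card_mul_sum_norm_sq {ι E : Type*} [SeminormedAddCommGroup E]
    (s : Finset ι) (v : ι → E) :
    ‖∑ i ∈ s, v i‖ ^ 2 ≤ #s * ∑ i ∈ s, ‖v i‖ ^ 2 :=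
  calc ‖∑ i ∈ s, v i‖ ^ 2 ≤ (∑ i ∈ s, ‖v i‖) ^ 2 := by gcongr; exact norm_sum_le s v
    _ ≤ #s * ∑ i ∈ s, ‖v i‖ ^ 2 := sq_sum_le_card_mul_sum_sq

section InnerProductSpace

variable {𝕜 E ι : Type*} [RCLike 𝕜] [NormedAddCommGroup E] [InnerProductSpace 𝕜 E]

theorem norm_sum_sq_eq_sum_norm_sq_of_inner_eq_zero (s : Finset ι) (v : ι → E)
    (hv : ∀ i ∈ s, ∀ j ∈ s, i ≠ j → inner 𝕜 (v i) (v j) = 0) :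
    ‖∑ i ∈ s, v i‖ ^ 2 = ∑ i ∈ s, ‖v i‖ ^ 2 := by
  have inner_sum_right : ∀ i ∈ s, inner 𝕜 (v i) (∑ j ∈ s, v j) = inner 𝕜 (v i) (v i) :=
    fun i hi => by
      rw [inner_sum]
      exact sum_eq_single_of_mem i hi fun j hj hji => hv i hi j hj hji.symm
  rw [@norm_sq_eq_re_inner 𝕜, sum_inner, sum_congr rfl inner_sum_right, map_sum]
  exact sum_congr rfl fun i _ => (norm_sq_eq_re_inner (𝕜 := 𝕜) (v i)).symm

theorem norm_sum_sq_le_card_mul_sum_norm_sq_of_coloring {κ : Type*} [Fintype κ] [DecidableEq κ]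
    (s : Finset ι) (v : ι → E) (c : ι → κ)
    (hv : ∀ i ∈ s, ∀ j ∈ s, i ≠ j → c i = c j → inner 𝕜 (v i) (v j) = 0) :
    ‖∑ i ∈ s, v i‖ ^ 2 ≤ Fintype.card κ * ∑ i ∈ s, ‖v i‖ ^ 2 := by
  have class_pythagoras : ∀ k, ‖∑ i ∈ s with c i = k, v i‖ ^ 2 = ∑ i ∈ s with c i = k, ‖v i‖ ^ 2 :=
    fun k => norm_sum_sq_eq_sum_norm_sq_of_inner_eq_zero (𝕜 := 𝕜) _ v fun i hi j hj hij => by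
      rw [mem_filter] at hi hj
      exact hv i hi.1 j hj.1 hij (hi.2.trans hj.2.symm)
  calc ‖∑ i ∈ s, v i‖ ^ 2 = ‖∑ k, ∑ i ∈ s with c i = k, v i‖ ^ 2 := by rw [sum_fiberwise]
    _ ≤ Fintype.card κ * ∑ k, ‖∑ i ∈ s with c i = k, v i‖ ^ 2 :=
      norm_sum_sq_le_card_mul_sum_norm_sq univ _
    _ = Fintype.card κ * ∑ i ∈ s, ‖v i‖ ^ 2 := by
      simp only [class_pythagoras, sum_fiberwise]

end InnerProductSpace

/-- Coloring estimate: if vectors with the same color are pairwise orthogonal, then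
    ‖∑ wᵢ‖² ≤ ζ · ∑ ‖wᵢ‖². -/
theorem coloring_sum_sq_estimate {E : Type*} [NormedAddCommGroup E] [InnerProductSpace ℝ E]
    (M ζ : ℕ) (w : Fin M → E) (c : Fin M → Fin ζ)
    (horth : ∀ i j : Fin M, i ≠ j → c i = c j → inner ℝ (w i) (w j) = (0 : ℝ)) :
    ‖∑ i, w i‖ ^ 2 ≤ (ζ : ℝ) * ∑ i, ‖w i‖ ^ 2 := by
  simpa using norm_sum_sq_le_card_mul_sum_norm_sq_of_coloring (𝕜 := ℝ) univ w c
    fun i _ j _ => horth i j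
end

section
/- Let E be an n-dimensional real vector space, let a(·,·) be an inner product on E, and let b(·,·) be a symmetric positive semidefinite bilinear form on E. Suppose (φ₁, …, φ_n) is an a-orthonormal basis of E with b(φ_j, φ_k) = 0 for j ≠ k, and set λ_k := b(φ_k, φ_k), arranged so that λ₁ ≥ λ₂ ≥ … ≥ λ_n ≥ 0. Then for every m with 1 ≤ m < n and every subspace Q ⊆ E with dim Q ≤ m, there exists u ∈ E with a(u, u) = 1 such that b(u − q, u − q) ≥ λ_{m+1} for all q ∈ Q; i.e., the span of the first m eigenvectors is optimal among all m-dimensional subspaces in the sense of the Kolmogorov n-width. -/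
/-!
Courant–Fischer argument: on the span `V` of the first `m + 1` eigenvectors one has
`λ_{m+1} a(v, v) ≤ b(v, v)`. Since `dim V = m + 1 > dim Q`, restricting `v ↦ b(v, ·)` to `Q`
has a nontrivial kernel, so some `a`-normalised `u ∈ V` is `b`-orthogonal to `Q`, and then
`b(u - q, u - q) = b(u, u) + b(q, q) ≥ λ_{m+1}`.
-/

open Module Submodule

namespace LinearMap

theorem exists_ne_zero_mem_forall_apply_eq_zero_of_finrank_lt {K V : Type*} [Field K]
    [AddCommGroup V] [Module K V] (B : V →ₗ[K] V →ₗ[K] K) {W Q : Submodule K V}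
    [FiniteDimensional K W] [FiniteDimensional K Q] (h : finrank K Q < finrank K W) :
    ∃ w ∈ W, w ≠ 0 ∧ ∀ q ∈ Q, B w q = 0 := by
  let f : W →ₗ[K] Q →ₗ[K] K := B.compl₁₂ W.subtype Q.subtype
  have hker : ker f ≠ ⊥ :=
    f.ker_ne_bot_of_finrank_lt (by rwa [Subspace.dual_finrank_eq])
  obtain ⟨w, hw, hw0⟩ := Submodule.exists_mem_ne_zero_of_ne_bot hker
  refine ⟨w, w.2, by simpa using hw0, fun q hq => ?_⟩
  exact LinearMap.congr_fun (mem_ker.1 hw) ⟨q, hq⟩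

namespace BilinForm

theorem apply_sum_smul_sum_smul_of_iIsOrtho {R M ι : Type*} [CommRing R]
    [AddCommGroup M] [Module R M] [Fintype ι] {B : LinearMap.BilinForm R M} {ψ : ι → M}
    (hB : B.iIsOrtho ψ) (c : ι → R) :
    B (∑ i, c i • ψ i) (∑ i, c i • ψ i) = ∑ i, c i * c i * B (ψ i) (ψ i) := by
  simp only [map_sum, map_smul, LinearMap.sum_apply, LinearMap.smul_apply, smul_eq_mul]
  refine Finset.sum_congr rfl fun i _ => ?_
  rw [Finset.sum_eq_single i (fun j _ hji => by rw [iIsOrtho_def.1 hB _ _ hji, mul_zero]) (by simp)]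
  ring

theorem apply_sub_self_eq_add {R M : Type*} [CommRing R] [AddCommGroup M] [Module R M]
    {B : LinearMap.BilinForm R M} {x y : M} (hxy : B x y = 0) (hyx : B y x = 0) :
    B (x - y) (x - y) = B x x + B y y := by
  simp only [map_sub, LinearMap.sub_apply, hxy, hyx]
  ring

theorem apply_inv_sqrt_smul_self {M : Type*} [AddCommGroup M] [Module ℝ M]
    (B : LinearMap.BilinForm ℝ M) {v : M} (hv : 0 < B v v) :
    B ((√(B v v))⁻¹ • v) ((√(B v v))⁻¹ • v) = 1 := by
  simp only [map_smul, LinearMap.smul_apply, smul_eq_mul, ← mul_assoc, ← mul_inv,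
    Real.mul_self_sqrt hv.le, inv_mul_cancel₀ hv.ne']

theorem iIsOrtho_of_apply_eq_ite {R M ι : Type*} [CommRing R] [AddCommGroup M] [Module R M]
    [DecidableEq ι] {B : LinearMap.BilinForm R M} {ψ : ι → M}
    (hB : ∀ i j, B (ψ i) (ψ j) = if i = j then 1 else 0) : B.iIsOrtho ψ :=
  fun i j hij => by simpa [hij] using hB i j

theorem finrank_span_eq_card_of_apply_eq_ite {K V ι : Type*} [Field K] [AddCommGroup V]
    [Module K V] [Fintype ι] [DecidableEq ι] {B : LinearMap.BilinForm K V} {ψ : ι → V}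
    (hB : ∀ i j, B (ψ i) (ψ j) = if i = j then 1 else 0) :
    finrank K (span K (Set.range ψ)) = Fintype.card ι :=
  finrank_span_eq_card <| linearIndependent_of_iIsOrtho (iIsOrtho_of_apply_eq_ite hB)
    fun i => by simp [hB]

theorem mul_apply_self_le_of_mem_span {M ι : Type*} [AddCommGroup M]
    [Module ℝ M] [Fintype ι] [DecidableEq ι] {a b : LinearMap.BilinForm ℝ M} {ψ : ι → M}
    (ha : ∀ i j, a (ψ i) (ψ j) = if i = j then 1 else 0) (hb : b.iIsOrtho ψ) {l : ℝ}
    (hl : ∀ i, l ≤ b (ψ i) (ψ i)) {v : M} (hv : v ∈ span ℝ (Set.range ψ)) :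
    l * a v v ≤ b v v := by
  obtain ⟨c, rfl⟩ := (mem_span_range_iff_exists_fun ℝ).1 hv
  rw [apply_sum_smul_sum_smul_of_iIsOrtho (iIsOrtho_of_apply_eq_ite ha),
    apply_sum_smul_sum_smul_of_iIsOrtho hb, Finset.mul_sum]
  refine Finset.sum_le_sum fun i _ => ?_
  rw [ha i i, if_pos rfl, mul_one, mul_comm]
  exact mul_le_mul_of_nonneg_left (hl i) (mul_self_nonneg _)

end BilinForm

end LinearMap

open LinearMap.BilinForm

theorem spectral_space_kolmogorov_optimal_general {E : Type*} [AddCommGroup E] [Module ℝ E]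
    (n : ℕ) (a b : E →ₗ[ℝ] E →ₗ[ℝ] ℝ)
    (ha_pos : ∀ x : E, x ≠ 0 → 0 < a x x)
    (hb_symm : ∀ x y : E, b x y = b y x)
    (hb_psd : ∀ x : E, 0 ≤ b x x)
    (φ : Fin n → E)
    (ha_ortho : ∀ j k : Fin n, a (φ j) (φ k) = if j = k then 1 else 0)
    (hspan : Submodule.span ℝ (Set.range φ) = ⊤)
    (hb_diag : ∀ j k : Fin n, j ≠ k → b (φ j) (φ k) = 0)
    (hdecr : ∀ j k : Fin n, j ≤ k → b (φ k) (φ k) ≤ b (φ j) (φ j))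
    (m : ℕ) (hmn : m < n)
    (Q : Submodule ℝ E) (hQ : Module.finrank ℝ Q ≤ m) :
    ∃ u : E, a u u = 1 ∧
      ∀ q ∈ Q, b (φ ⟨m, hmn⟩) (φ ⟨m, hmn⟩) ≤ b (u - q) (u - q) := by
  have : FiniteDimensional ℝ E := ⟨fg_def.2 ⟨Set.range φ, Set.finite_range φ, hspan⟩⟩
  set ψ : Fin (m + 1) → E := fun i => φ (Fin.castLE hmn i)
  have hψa : ∀ i j, a (ψ i) (ψ j) = if i = j then 1 else 0 := by
    simp [ψ, ha_ortho, Fin.castLE_inj]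
  have hψb : iIsOrtho b ψ := fun i j hij => hb_diag _ _ (by simpa [Fin.castLE_inj] using hij)
  have hV : finrank ℝ (span ℝ (Set.range ψ)) = m + 1 := by
    simpa using finrank_span_eq_card_of_apply_eq_ite hψa
  obtain ⟨v, hvV, hv0, hvQ⟩ :=
    b.exists_ne_zero_mem_forall_apply_eq_zero_of_finrank_lt (W := span ℝ (Set.range ψ)) (Q := Q)
      (by omega)
  set u := (√(a v v))⁻¹ • v
  have hu : a u u = 1 := apply_inv_sqrt_smul_self a (ha_pos v hv0)
  refine ⟨u, hu, fun q hq => ?_⟩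
  have huQ : b u q = 0 := by simp [u, hvQ q hq]
  calc b (φ ⟨m, hmn⟩) (φ ⟨m, hmn⟩)
      = b (φ ⟨m, hmn⟩) (φ ⟨m, hmn⟩) * a u u := by rw [hu, mul_one]
    _ ≤ b u u := mul_apply_self_le_of_mem_span hψa hψb
        (fun i => hdecr _ _ (show (i : ℕ) ≤ m by omega)) (smul_mem _ _ hvV)
    _ ≤ b (u - q) (u - q) := by
        rw [apply_sub_self_eq_add huQ ((hb_symm q u).trans huQ)]
        linarith [hb_psd q]

/-- Kolmogorov n-width optimality: for any subspace Q of dimension ≤ m there is a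
    unit-a-norm element u whose best approximation error from Q in the seminorm b
    is at least λ_{m+1}. -/
theorem spectral_space_kolmogorov_optimal {E : Type*} [AddCommGroup E] [Module ℝ E]
    (n : ℕ) (a b : E →ₗ[ℝ] E →ₗ[ℝ] ℝ)
    (ha_symm : ∀ x y : E, a x y = a y x)
    (ha_pos : ∀ x : E, x ≠ 0 → 0 < a x x)
    (hb_symm : ∀ x y : E, b x y = b y x)
    (hb_psd : ∀ x : E, 0 ≤ b x x)
    (φ : Fin n → E)
    (ha_ortho : ∀ j k : Fin n, a (φ j) (φ k) = if j = k then 1 else 0)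
    (hspan : Submodule.span ℝ (Set.range φ) = ⊤)
    (hb_diag : ∀ j k : Fin n, j ≠ k → b (φ j) (φ k) = 0)
    (hdecr : ∀ j k : Fin n, j ≤ k → b (φ k) (φ k) ≤ b (φ j) (φ j))
    (m : ℕ) (hm1 : 1 ≤ m) (hmn : m < n)
    (Q : Submodule ℝ E) (hQ : Module.finrank ℝ Q ≤ m) :
    ∃ u : E, a u u = 1 ∧
      ∀ q ∈ Q, b (φ ⟨m, hmn⟩) (φ ⟨m, hmn⟩) ≤ b (u - q) (u - q) :=
  spectral_space_kolmogorov_optimal_general n a b ha_pos hb_symm hb_psd φ ha_ortho hspan hb_diag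
    hdecr m hmn Q hQ
end
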